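/- arXiv:1205.6145 — 2 statements merged into one kernel-verified Lean document; each statement's English description precedes it below -/
import Mathlib

section
/- Let A and B be (n-1)×(n-1) symmetric positive semi-definite real matrices. Then 2·(det((A+B)/2))^(1/(n+1)) ≥ (det A)^(1/(n+1)) + (det B)^(1/(n+1)). -/
/-!
Put `m = n - 1`. Minkowski's determinant inequality
`det A ^ (1/m) + det B ^ (1/m) ≤ det (A + B) ^ (1/m)` follows, for `B` positive definite, by the
congruence `S⁻¹ (·) S⁻¹` with `S = √B`, which reduces it to
`det M ^ (1/m) + 1 ≤ det (M + 1) ^ (1/m)`: in eigenvalues this is the superadditivity of the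
geometric mean, a consequence of AM-GM. Since
`1/(n+1) = θ/m` with `θ = m/(n+1) ≤ 1`, concavity of `t ↦ t ^ θ` turns Minkowski's inequality
into the claim.
-/

open Finset
open scoped MatrixOrder

theorem Real.geom_mean_weighted_add_one_le {ι : Type*} (s : Finset ι) (w μ : ι → ℝ)
    (hw : ∀ i ∈ s, 0 ≤ w i) (hw' : ∑ i ∈ s, w i = 1) (hμ : ∀ i ∈ s, 0 ≤ μ i) :
    ∏ i ∈ s, μ i ^ w i + 1 ≤ ∏ i ∈ s, (μ i + 1) ^ w i := by
  have hpos : ∀ i ∈ s, 0 < μ i + 1 := fun i hi => by linarith [hμ i hi]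
  have hP : 0 < ∏ i ∈ s, (μ i + 1) ^ w i :=
    prod_pos fun i hi => Real.rpow_pos_of_pos (hpos i hi) _
  -- AM-GM applied to `μ i / (μ i + 1)` and to `1 / (μ i + 1)`, whose sum is `1`
  have h₁ := Real.geom_mean_le_arith_mean_weighted s w (fun i => μ i / (μ i + 1)) hw hw'
    fun i hi => div_nonneg (hμ i hi) (hpos i hi).le
  have h₂ := Real.geom_mean_le_arith_mean_weighted s w (fun i => 1 / (μ i + 1)) hw hw'
    fun i hi => div_nonneg zero_le_one (hpos i hi).le
  have hsum : ∑ i ∈ s, w i * (μ i / (μ i + 1)) + ∑ i ∈ s, w i * (1 / (μ i + 1)) = 1 := by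
    rw [← sum_add_distrib]
    refine (sum_congr rfl fun i hi => ?_).trans hw'
    rw [← mul_add, ← add_div, div_self (hpos i hi).ne', mul_one]
  rw [prod_congr rfl fun i hi => Real.div_rpow (hμ i hi) (hpos i hi).le (w i),
    prod_div_distrib] at h₁
  rw [prod_congr rfl fun i hi => Real.div_rpow zero_le_one (hpos i hi).le (w i),
    prod_div_distrib] at h₂
  simp only [Real.one_rpow, prod_const_one] at h₂
  have key := add_le_add h₁ h₂
  rwa [hsum, ← add_div, div_le_one hP] at key

namespace Matrix

variable {ι : Type*} [Fintype ι] [DecidableEq ι]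

theorem IsHermitian.det_add_one {𝕜 : Type*} [RCLike 𝕜] {A : Matrix ι ι 𝕜}
    (hA : A.IsHermitian) :
    (A + 1).det = ∏ i, ((hA.eigenvalues i : 𝕜) + 1) := by
  have hcfc : A + 1 = cfc (· + 1 : ℝ → ℝ) A := by
    rw [cfc_add_const .., cfc_id' .., map_one]
  rw [hcfc, hA.cfc_eq]
  simp [IsHermitian.cfc, -Unitary.conjStarAlgAut_apply]

theorem PosSemidef.det_rpow_inv_card_add_one_le [Nonempty ι] {M : Matrix ι ι ℝ}
    (hM : M.PosSemidef) :
    M.det ^ (Fintype.card ι : ℝ)⁻¹ + 1 ≤ (M + 1).det ^ (Fintype.card ι : ℝ)⁻¹ := by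
  have hw : ∑ _i : ι, (Fintype.card ι : ℝ)⁻¹ = 1 := by simp
  have hμ : ∀ i ∈ univ, 0 ≤ hM.1.eigenvalues i := fun i _ => hM.eigenvalues_nonneg i
  have := Real.geom_mean_weighted_add_one_le univ (fun _ => (Fintype.card ι : ℝ)⁻¹)
    hM.1.eigenvalues (fun _ _ => by positivity) hw hμ
  simp only [hM.1.det_add_one, hM.1.det_eq_prod_eigenvalues, RCLike.ofReal_real_eq_id, id]
  rwa [← Real.finsetProd_rpow _ _ hμ,
    ← Real.finsetProd_rpow _ _ fun i hi => by linarith [hμ i hi]]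

theorem PosSemidef.det_rpow_inv_card_add_le_of_posDef [Nonempty ι] {A B : Matrix ι ι ℝ}
    (hA : A.PosSemidef) (hB : B.PosDef) :
    A.det ^ (Fintype.card ι : ℝ)⁻¹ + B.det ^ (Fintype.card ι : ℝ)⁻¹ ≤
      (A + B).det ^ (Fintype.card ι : ℝ)⁻¹ := by
  set r : ℝ := (Fintype.card ι : ℝ)⁻¹
  set S := CFC.sqrt B
  have hS : S.IsHermitian := (nonneg_iff_posSemidef.mp (CFC.sqrt_nonneg B)).1
  have hSS : S * S = B := CFC.sqrt_mul_sqrt_self B hB.posSemidef.nonneg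
  have hdet_conj : ∀ X, (S * X * S).det = B.det * X.det := fun X => by
    rw [← hSS, det_mul, det_mul, det_mul]; ring
  have hS_unit : IsUnit S.det := by
    refine isUnit_iff_ne_zero.mpr fun h => hB.det_pos.ne' ?_
    rw [← hSS, det_mul, h, zero_mul]
  set M := S⁻¹ * A * S⁻¹
  have hM : M.PosSemidef := by
    simpa only [conjTranspose_nonsing_inv, hS.eq] using hA.mul_mul_conjTranspose_same S⁻¹
  have hA_eq : A = S * M * S := by
    simp only [M, Matrix.mul_assoc, nonsing_inv_mul _ hS_unit, Matrix.mul_one,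
      mul_nonsing_inv_cancel_left _ _ hS_unit]
  have hAB_eq : A + B = S * (M + 1) * S := by
    rw [Matrix.mul_add, Matrix.add_mul, Matrix.mul_one, hSS, ← hA_eq]
  have hB_det := hB.det_pos.le
  calc A.det ^ r + B.det ^ r = B.det ^ r * (M.det ^ r + 1) := by
        rw [hA_eq, hdet_conj, Real.mul_rpow hB_det hM.det_nonneg]; ring
    _ ≤ B.det ^ r * (M + 1).det ^ r := by
        gcongr; exact hM.det_rpow_inv_card_add_one_le
    _ = (A + B).det ^ r := by
        rw [hAB_eq, hdet_conj, Real.mul_rpow hB_det (hM.add PosSemidef.one).det_nonneg]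

theorem PosSemidef.det_rpow_inv_card_add_le [Nonempty ι] {A B : Matrix ι ι ℝ}
    (hA : A.PosSemidef) (hB : B.PosSemidef) :
    A.det ^ (Fintype.card ι : ℝ)⁻¹ + B.det ^ (Fintype.card ι : ℝ)⁻¹ ≤
      (A + B).det ^ (Fintype.card ι : ℝ)⁻¹ := by
  by_cases hB_pd : B.PosDef
  · exact hA.det_rpow_inv_card_add_le_of_posDef hB_pd
  by_cases hA_pd : A.PosDef
  · simpa only [add_comm] using hB.det_rpow_inv_card_add_le_of_posDef hA_pd
  rw [hA.posDef_iff_det_ne_zero, not_not] at hA_pd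
  rw [hB.posDef_iff_det_ne_zero, not_not] at hB_pd
  rw [hA_pd, hB_pd, Real.zero_rpow (by positivity), zero_add]
  exact Real.rpow_nonneg (hA.add hB).det_nonneg _

theorem det_smul_rpow_inv_card [Nonempty ι] {c : ℝ} (hc : 0 ≤ c) {A : Matrix ι ι ℝ}
    (hA : 0 ≤ A.det) :
    (c • A).det ^ (Fintype.card ι : ℝ)⁻¹ = c * A.det ^ (Fintype.card ι : ℝ)⁻¹ := by
  rw [det_smul, Real.mul_rpow (pow_nonneg hc _) hA, ← Real.rpow_natCast, ← Real.rpow_mul hc,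
    mul_inv_cancel₀ (by positivity), Real.rpow_one]

theorem PosSemidef.det_rpow_add_le_two_mul_det_midpoint_rpow {A B : Matrix ι ι ℝ}
    (hA : A.PosSemidef) (hB : B.PosSemidef) {p : ℝ} (hp₀ : 0 ≤ p)
    (hp : p * Fintype.card ι ≤ 1) :
    A.det ^ p + B.det ^ p ≤ 2 * ((2 : ℝ)⁻¹ • (A + B)).det ^ p := by
  cases isEmpty_or_nonempty ι
  · norm_num [det_isEmpty]
  set m : ℝ := (Fintype.card ι : ℝ)
  set θ := p * m
  have hm : 0 < m := by positivity
  have hθ₀ : 0 ≤ θ := by positivity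
  -- `det X ^ p` is a concave function of `det X ^ m⁻¹`, which is itself superadditive
  have hpow : ∀ X : Matrix ι ι ℝ, 0 ≤ X.det → X.det ^ p = (X.det ^ m⁻¹) ^ θ :=
    fun X hX => by rw [← Real.rpow_mul hX, show m⁻¹ * (p * m) = p by field_simp]
  have hAB := (hA.add hB).smul (by norm_num : (0 : ℝ) ≤ 2⁻¹)
  set x := A.det ^ m⁻¹
  set y := B.det ^ m⁻¹
  have hx : 0 ≤ x := Real.rpow_nonneg hA.det_nonneg _
  have hy : 0 ≤ y := Real.rpow_nonneg hB.det_nonneg _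
  have hmink : (x + y) / 2 ≤ ((2 : ℝ)⁻¹ • (A + B)).det ^ m⁻¹ := by
    rw [det_smul_rpow_inv_card (by norm_num) (hA.add hB).det_nonneg]
    linarith [hA.det_rpow_inv_card_add_le hB]
  have hconc := (Real.concaveOn_rpow hθ₀ hp).2 hx hy (by norm_num : (0 : ℝ) ≤ 2⁻¹)
    (by norm_num : (0 : ℝ) ≤ 2⁻¹) (by norm_num)
  simp only [smul_eq_mul] at hconc
  rw [hpow A hA.det_nonneg, hpow B hB.det_nonneg, hpow _ hAB.det_nonneg]
  calc x ^ θ + y ^ θ ≤ 2 * ((x + y) / 2) ^ θ := by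
        rw [show (x + y) / 2 = 2⁻¹ * x + 2⁻¹ * y by ring]; linarith
    _ ≤ 2 * (((2 : ℝ)⁻¹ • (A + B)).det ^ m⁻¹) ^ θ := by gcongr

end Matrix

theorem det_rpow_avg_ge_general (n : ℕ)
    (A B : Matrix (Fin (n - 1)) (Fin (n - 1)) ℝ)
    (hA : A.PosSemidef) (hB : B.PosSemidef) :
    A.det ^ (1 / ((n : ℝ) + 1)) + B.det ^ (1 / ((n : ℝ) + 1)) ≤
      2 * ((2 : ℝ)⁻¹ • (A + B)).det ^ (1 / ((n : ℝ) + 1)) := by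
  refine hA.det_rpow_add_le_two_mul_det_midpoint_rpow hB (by positivity) ?_
  have : ((n - 1 : ℕ) : ℝ) ≤ n := by exact_mod_cast Nat.sub_le n 1
  rw [Fintype.card_fin, one_div_mul_eq_div, div_le_one (by positivity)]
  linarith

/-- Lemma 3.2 (inequality part): for symmetric positive semi-definite
`(n-1)×(n-1)` matrices `A`, `B`,
`2·det((A+B)/2)^(1/(n+1)) ≥ det(A)^(1/(n+1)) + det(B)^(1/(n+1))`. -/
theorem det_rpow_avg_ge (n : ℕ) (hn : 2 ≤ n)
    (A B : Matrix (Fin (n - 1)) (Fin (n - 1)) ℝ)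
    (hA : A.PosSemidef) (hB : B.PosSemidef) :
    A.det ^ (1 / ((n : ℝ) + 1)) + B.det ^ (1 / ((n : ℝ) + 1)) ≤
      2 * ((2 : ℝ)⁻¹ • (A + B)).det ^ (1 / ((n : ℝ) + 1)) :=
  det_rpow_avg_ge_general n A B hA hB
end

section
/- Let A and B be (n-1)×(n-1) symmetric positive semi-definite matrices with B positive definite. If 2·(det((A+B)/2))^(1/(n+1)) = (det A)^(1/(n+1)) + (det B)^(1/(n+1)), then A = B. -/
/-!
Congruence by a square root of `B` reduces the claim to `B = 1`, and diagonalising `A` then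
reduces it to eigenvalues `μ i ≥ 0` with `2 (∏ (1 + μ i) / 2) ^ t = (∏ μ i) ^ t + 1`, where
`t = 1 / (n + 1)` and `d t < 1` for the size `d = n - 1`. Superadditivity of the geometric mean
gives `(∏ (1 + μ i) / 2) ^ (1 / d) ≥ (1 + q) / 2` with `q = (∏ μ i) ^ (1 / d)`, so strict
concavity of `x ↦ x ^ (d t)` forces `q = 1`. Then both products equal `1`, and the termwise
AM-GM inequality `μ i ≤ ((1 + μ i) / 2) ^ 2` forces every `μ i = 1`.
-/

open Finset

namespace Real

variable {ι : Type*} [Fintype ι]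

section Nonempty

variable [Nonempty ι]

theorem geom_mean_le_arith_mean_univ {z : ι → ℝ} (hz : ∀ i, 0 ≤ z i) :
    (∏ i, z i) ^ (Fintype.card ι : ℝ)⁻¹ ≤ (∑ i, z i) / Fintype.card ι := by
  simpa using geom_mean_le_arith_mean univ (fun _ ↦ 1) z (fun _ _ ↦ zero_le_one)
    (by simpa using Fintype.card_pos) (fun i _ ↦ hz i)

theorem geom_mean_add_geom_mean_le_geom_mean_add {a b : ι → ℝ} (ha : ∀ i, 0 ≤ a i)
    (hb : ∀ i, 0 ≤ b i) :
    (∏ i, a i) ^ (Fintype.card ι : ℝ)⁻¹ + (∏ i, b i) ^ (Fintype.card ι : ℝ)⁻¹ ≤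
      (∏ i, (a i + b i)) ^ (Fintype.card ι : ℝ)⁻¹ := by
  set e : ℝ := (Fintype.card ι : ℝ)⁻¹
  have he : e ≠ 0 := by simp [e, Fintype.card_ne_zero]
  by_cases hzero : ∃ i, a i + b i = 0
  · obtain ⟨i, hi⟩ := hzero
    have hai : a i = 0 := by linarith [ha i, hb i]
    have hbi : b i = 0 := by linarith [ha i, hb i]
    rw [prod_eq_zero (mem_univ i) hai, prod_eq_zero (mem_univ i) hbi, zero_rpow he, zero_add]
    exact rpow_nonneg (prod_nonneg fun j _ ↦ add_nonneg (ha j) (hb j)) e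
  push Not at hzero
  have hc : ∀ i, 0 < a i + b i := fun i ↦ (add_nonneg (ha i) (hb i)).lt_of_ne' (hzero i)
  set G := (∏ i, (a i + b i)) ^ e
  -- Dividing by `a + b` turns both geometric means into ones of numbers summing to `1` termwise.
  have hnormalize : ∀ x : ι → ℝ, (∀ i, 0 ≤ x i) →
      (∏ i, x i) ^ e ≤ G * ((∑ i, x i / (a i + b i)) / Fintype.card ι) := by
    intro x hx
    have hprod : ∏ i, x i = (∏ i, (a i + b i)) * ∏ i, x i / (a i + b i) := by
      rw [← prod_mul_distrib]
      exact prod_congr rfl fun i _ ↦ (mul_div_cancel₀ _ (hc i).ne').symm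
    rw [hprod, mul_rpow (prod_nonneg fun i _ ↦ (hc i).le)
      (prod_nonneg fun i _ ↦ div_nonneg (hx i) (hc i).le)]
    exact mul_le_mul_of_nonneg_left
      (geom_mean_le_arith_mean_univ fun i ↦ div_nonneg (hx i) (hc i).le)
      (rpow_nonneg (prod_nonneg fun i _ ↦ (hc i).le) e)
  calc (∏ i, a i) ^ e + (∏ i, b i) ^ e
      ≤ G * ((∑ i, a i / (a i + b i)) / Fintype.card ι) +
          G * ((∑ i, b i / (a i + b i)) / Fintype.card ι) :=
        add_le_add (hnormalize a ha) (hnormalize b hb)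
    _ = G := by
        simp_rw [← mul_add, ← add_div, ← sum_add_distrib, ← add_div, div_self (hc _).ne']
        simp [Fintype.card_ne_zero]

end Nonempty

theorem eq_one_of_prod_eq_one_of_prod_one_add_div_two_eq_one {μ : ι → ℝ} (hμ : ∀ i, 0 ≤ μ i)
    (hprod : ∏ i, μ i = 1) (hprod_avg : ∏ i, (1 + μ i) / 2 = 1) : μ = 1 := by
  by_contra hne
  obtain ⟨j, hj⟩ : ∃ j, μ j ≠ 1 := by simpa [funext_iff] using hne
  have hpos : ∀ i, 0 < μ i := fun i ↦
    (hμ i).lt_of_ne' fun h ↦ by simp [prod_eq_zero (mem_univ i) h] at hprod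
  have hamgm : ∀ i, μ i ≤ ((1 + μ i) / 2) ^ 2 := fun i ↦ by nlinarith [sq_nonneg (μ i - 1)]
  have hamgm_strict : μ j < ((1 + μ j) / 2) ^ 2 := by
    nlinarith [sq_pos_of_ne_zero (sub_ne_zero.mpr hj)]
  have := prod_lt_prod (fun i _ ↦ hpos i) (fun i _ ↦ hamgm i) ⟨j, mem_univ j, hamgm_strict⟩
  rw [hprod, prod_pow, hprod_avg, one_pow] at this
  exact this.false

theorem one_add_rpow_div_two_lt_rpow {s x : ℝ} (hs₀ : 0 < s) (hs₁ : s < 1) (hx : 0 ≤ x)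
    (hx₁ : x ≠ 1) : (1 + x ^ s) / 2 < ((1 + x) / 2) ^ s := by
  have := (strictConcaveOn_rpow hs₀ hs₁).2 (Set.mem_Ici.mpr zero_le_one) (Set.mem_Ici.mpr hx)
    hx₁.symm one_half_pos one_half_pos (by norm_num)
  simp only [smul_eq_mul, one_rpow] at this
  rwa [show (1 + x ^ s) / 2 = 1 / 2 * 1 + 1 / 2 * x ^ s by ring,
    show (1 + x) / 2 = 1 / 2 * 1 + 1 / 2 * x by ring]

theorem eq_one_of_two_mul_prod_rpow_eq {t : ℝ} (ht : 0 < t) (hdt : Fintype.card ι * t < 1)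
    {μ : ι → ℝ} (hμ : ∀ i, 0 ≤ μ i)
    (heq : 2 * (∏ i, (1 + μ i) / 2) ^ t = (∏ i, μ i) ^ t + 1) : μ = 1 := by
  rcases isEmpty_or_nonempty ι with hι | hι
  · exact Subsingleton.elim _ _
  set d := Fintype.card ι
  have hd : d ≠ 0 := Fintype.card_ne_zero
  set P := ∏ i, (1 + μ i) / 2
  set Q := ∏ i, μ i
  have hP : 0 ≤ P := prod_nonneg fun i _ ↦ by linarith [hμ i]
  have hQ : 0 ≤ Q := prod_nonneg fun i _ ↦ hμ i
  set s : ℝ := d * t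
  have hpow : ∀ x : ℝ, 0 ≤ x → x ^ t = (x ^ (d : ℝ)⁻¹) ^ s := fun x hx ↦ by
    rw [← rpow_mul hx, inv_mul_cancel_left₀ (by exact_mod_cast hd)]
  have hmink : (1 + Q ^ (d : ℝ)⁻¹) / 2 ≤ P ^ (d : ℝ)⁻¹ := by
    have := geom_mean_add_geom_mean_le_geom_mean_add (a := fun _ ↦ (1 : ℝ) / 2)
      (b := fun i ↦ μ i / 2) (fun _ ↦ by norm_num) (fun i ↦ by linarith [hμ i])
    simp only [prod_const, card_univ, prod_div_distrib] at this
    rw [pow_rpow_inv_natCast (by norm_num) hd, div_rpow hQ (by positivity),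
      pow_rpow_inv_natCast (by norm_num) hd] at this
    simpa only [P, add_div, ← prod_div_distrib] using this
  have hq : Q ^ (d : ℝ)⁻¹ = 1 := by
    by_contra hq
    have hs : s < 1 := hdt
    have hconcave := one_add_rpow_div_two_lt_rpow (by positivity) hs (rpow_nonneg hQ _) hq
    have := rpow_le_rpow (by positivity) hmink (by positivity : 0 ≤ s)
    rw [hpow P hP, hpow Q hQ] at heq
    linarith
  have hQ1 : Q = 1 := by
    rw [← rpow_inv_natCast_pow hQ hd, hq, one_pow]
  have hP1 : P = 1 := by
    rw [hQ1, one_rpow] at heq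
    rw [← rpow_rpow_inv hP ht.ne', show P ^ t = 1 by linarith, one_rpow]
  exact eq_one_of_prod_eq_one_of_prod_one_add_div_two_eq_one hμ hQ1 hP1

end Real

namespace Matrix

variable {n : Type*} [Fintype n] [DecidableEq n]

open scoped MatrixOrder ComplexOrder in
theorem PosDef.exists_isUnit_eq_conjTranspose_mul_self {𝕜 : Type*} [RCLike 𝕜]
    {B : Matrix n n 𝕜} (hB : B.PosDef) : ∃ X : Matrix n n 𝕜, IsUnit X ∧ B = Xᴴ * X := by
  refine ⟨CFC.sqrt B, (CFC.isUnit_sqrt_iff B hB.posSemidef.nonneg).mpr hB.isUnit, ?_⟩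
  rw [(nonneg_iff_posSemidef.mp (CFC.sqrt_nonneg B)).isHermitian.eq,
    CFC.sqrt_mul_sqrt_self B hB.posSemidef.nonneg]

theorem det_conjTranspose_mul_mul {R : Type*} [CommRing R] [StarRing R] (X Y : Matrix n n R) :
    det (Xᴴ * Y * X) = det (Xᴴ * X) * det Y := by
  simp only [det_mul]
  ring

theorem PosSemidef.eq_one_of_two_mul_det_rpow_eq {C : Matrix n n ℝ} (hC : C.PosSemidef) {t : ℝ}
    (ht : 0 < t) (hdt : Fintype.card n * t < 1)
    (heq : 2 * det ((2 : ℝ)⁻¹ • (C + 1)) ^ t = det C ^ t + 1) : C = 1 := by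
  set μ := hC.isHermitian.eigenvalues
  set U := hC.isHermitian.eigenvectorUnitary
  have hspec : C = Unitary.conjStarAlgAut ℝ _ U (diagonal μ) := by
    simpa using hC.isHermitian.spectral_theorem
  have hdet : ∀ D, det (Unitary.conjStarAlgAut ℝ _ U D) = det D := fun D ↦
    det_conj_of_mul_eq_one (Unitary.coe_mul_star_self U) (Unitary.coe_star_mul_self U)
  have hdetC : det C = ∏ i, μ i := by rw [hspec, hdet, det_diagonal]
  have hdet_avg : det ((2 : ℝ)⁻¹ • (C + 1)) = ∏ i, (1 + μ i) / 2 := by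
    have : (2 : ℝ)⁻¹ • (diagonal μ + 1) = diagonal fun i ↦ (1 + μ i) / 2 := by
      ext i j
      rcases eq_or_ne i j with rfl | hij
      · simp only [smul_apply, add_apply, diagonal_apply_eq, one_apply_eq, smul_eq_mul]
        ring
      · simp [hij]
    rw [hspec, ← map_one (Unitary.conjStarAlgAut ℝ _ U), ← map_add, ← map_smul, hdet, this,
      det_diagonal]
  have hμ : μ = 1 := Real.eq_one_of_two_mul_prod_rpow_eq ht hdt hC.eigenvalues_nonneg
    (by rwa [hdet_avg, hdetC] at heq)
  rw [hspec, hμ, Pi.one_def, diagonal_one, map_one]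

theorem PosSemidef.eq_of_two_mul_det_rpow_eq {A B : Matrix n n ℝ} (hA : A.PosSemidef)
    (hB : B.PosDef) {t : ℝ} (ht : 0 < t) (hdt : Fintype.card n * t < 1)
    (heq : 2 * det ((2 : ℝ)⁻¹ • (A + B)) ^ t = det A ^ t + det B ^ t) : A = B := by
  obtain ⟨X, hX, rfl⟩ := hB.exists_isUnit_eq_conjTranspose_mul_self
  set C := X⁻¹ᴴ * A * X⁻¹
  have hAC : A = Xᴴ * C * X := by
    have hXX : X⁻¹ * X = 1 := nonsing_inv_mul X ((isUnit_iff_isUnit_det X).mp hX)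
    calc A = (X⁻¹ * X)ᴴ * A * (X⁻¹ * X) := by rw [hXX, conjTranspose_one, one_mul, mul_one]
      _ = Xᴴ * C * X := by simp only [C, conjTranspose_mul, Matrix.mul_assoc]
  have havg : (2 : ℝ)⁻¹ • (A + Xᴴ * X) = Xᴴ * ((2 : ℝ)⁻¹ • (C + 1)) * X := by
    rw [hAC, Matrix.mul_smul, Matrix.smul_mul, Matrix.mul_add, Matrix.add_mul, mul_one]
  have hCpsd : C.PosSemidef := hA.conjTranspose_mul_mul_same X⁻¹
  have havg_psd : ((2 : ℝ)⁻¹ • (C + 1)).PosSemidef :=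
    (hCpsd.add PosSemidef.one).smul (by norm_num)
  have hβ : 0 < det (Xᴴ * X) := hB.det_pos
  rw [havg, hAC, det_conjTranspose_mul_mul, det_conjTranspose_mul_mul,
    Real.mul_rpow hβ.le havg_psd.det_nonneg, Real.mul_rpow hβ.le hCpsd.det_nonneg] at heq
  have hCeq : (2 : ℝ) * det ((2 : ℝ)⁻¹ • (C + 1)) ^ t = det C ^ t + 1 := by
    refine mul_left_cancel₀ (Real.rpow_pos_of_pos hβ t).ne' ?_
    linear_combination heq
  have hC : C = 1 := hCpsd.eq_one_of_two_mul_det_rpow_eq ht hdt hCeq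
  rw [hAC, hC, mul_one]

end Matrix

theorem det_rpow_avg_eq_iff_general (n : ℕ)
    (A B : Matrix (Fin (n - 1)) (Fin (n - 1)) ℝ)
    (hA : A.PosSemidef) (hBpd : B.PosDef)
    (heq : 2 * ((2 : ℝ)⁻¹ • (A + B)).det ^ (1 / ((n : ℝ) + 1)) =
      A.det ^ (1 / ((n : ℝ) + 1)) + B.det ^ (1 / ((n : ℝ) + 1))) :
    A = B := by
  have hcard : (Fintype.card (Fin (n - 1)) : ℝ) * (1 / ((n : ℝ) + 1)) < 1 := by
    have : ((n - 1 : ℕ) : ℝ) ≤ n := by exact_mod_cast Nat.sub_le n 1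
    rw [Fintype.card_fin, mul_one_div, div_lt_one (by positivity)]
    linarith
  exact hA.eq_of_two_mul_det_rpow_eq hBpd (by positivity) hcard heq

/-- Lemma 3.2 (equality case): for symmetric positive semi-definite matrices
`A`, `B` with `B` positive definite, equality
`2·det((A+B)/2)^(1/(n+1)) = det(A)^(1/(n+1)) + det(B)^(1/(n+1))` forces `A = B`. -/
theorem det_rpow_avg_eq_iff (n : ℕ) (hn : 2 ≤ n)
    (A B : Matrix (Fin (n - 1)) (Fin (n - 1)) ℝ)
    (hA : A.PosSemidef) (hB : B.PosSemidef) (hBpd : B.PosDef)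
    (heq : 2 * ((2 : ℝ)⁻¹ • (A + B)).det ^ (1 / ((n : ℝ) + 1)) =
      A.det ^ (1 / ((n : ℝ) + 1)) + B.det ^ (1 / ((n : ℝ) + 1))) :
    A = B :=
  det_rpow_avg_eq_iff_general n A B hA hBpd heq
end
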